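/- For all positive integers m, n, p, q, the thickness of the Kronecker product of complete bipartite graphs satisfies θ(K_{m,n} × K_{p,q}) = max{ θ(K_{mp,nq}), θ(K_{mq,np}) }. -/

import Mathlib

open SimpleGraph

/-- The Kronecker (tensor/direct/categorical) product of two simple graphs:
`(g, h)` is adjacent to `(g', h')` iff `g g' ∈ E(G)` and `h h' ∈ E(H)`. -/
def SimpleGraph.tensorProd {α β : Type*} (G : SimpleGraph α) (H : SimpleGraph β) :
    SimpleGraph (α × β) where
  Adj x y := G.Adj x.1 y.1 ∧ H.Adj x.2 y.2
  symm := ⟨fun _ _ h => ⟨h.1.symm, h.2.symm⟩⟩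
  loopless := ⟨fun _ h => G.loopless.irrefl _ h.1⟩

/-- A simple graph is planar if it has a plane drawing: an injective placement of the
vertices in `ℝ²` together with, for each edge, a simple arc joining the images of its
endpoints, such that the interior of each arc avoids all vertex images and the interiors
of arcs of distinct edges are pairwise disjoint. -/
def SimpleGraph.IsPlanar {V : Type*} (G : SimpleGraph V) : Prop :=
  ∃ (pos : V → ℝ × ℝ) (arc : G.edgeSet → ℝ → ℝ × ℝ),
    Function.Injective pos ∧
    (∀ e : G.edgeSet, ContinuousOn (arc e) (Set.Icc 0 1) ∧
      Set.InjOn (arc e) (Set.Icc 0 1) ∧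
      ∃ u v : V, (e : Sym2 V) = s(u, v) ∧ arc e 0 = pos u ∧ arc e 1 = pos v) ∧
    (∀ e : G.edgeSet, ∀ x ∈ Set.Ioo (0:ℝ) 1, ∀ w : V, arc e x ≠ pos w) ∧
    (∀ e f : G.edgeSet, e ≠ f →
      ∀ x ∈ Set.Ioo (0:ℝ) 1, ∀ y ∈ Set.Ioo (0:ℝ) 1, arc e x ≠ arc f y)

/-- `G` has a decomposition into `t` planar subgraphs: `t` planar subgraphs of `G`
whose union is `G`. -/
def SimpleGraph.HasPlanarDecomposition {V : Type*} (G : SimpleGraph V) (t : ℕ) : Prop :=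
  ∃ f : Fin t → SimpleGraph V, (∀ i, f i ≤ G) ∧ (∀ i, (f i).IsPlanar) ∧ (⨆ i, f i) = G

/-- The thickness of a graph: the minimum number of planar subgraphs whose union is `G`. -/
noncomputable def SimpleGraph.thickness {V : Type*} (G : SimpleGraph V) : ℕ :=
  sInf {t | G.HasPlanarDecomposition t}


/-!
Let `A ⊔ B` and `C ⊔ D` be the sides of `K_{m,n}` and `K_{p,q}`. Two vertices of the product are
adjacent exactly when they lie on opposite sides in both factors, so the product is the disjoint
union of the complete bipartite graph between `A × C` and `B × D` and the one between `A × D` and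
`B × C`, that is `K_{mp,nq} ⊔ K_{mq,np}`. Thickness is invariant under isomorphism, and the
thickness of a disjoint union is the maximum of the thicknesses: a decomposition of the union
restricts to both parts, and conversely the `i`-th planar pieces of the two parts are drawn side
by side in disjoint half-planes.
-/

namespace SimpleGraph

variable {V W : Type*}

lemma IsPlanar.of_hom {G : SimpleGraph V} {F : SimpleGraph W} (φ : G →g F)
    (hφ : Function.Injective φ) (hF : F.IsPlanar) : G.IsPlanar := by
  obtain ⟨pos, arc, hpos, hend, hint, hdisj⟩ := hF
  refine ⟨pos ∘ φ, fun e => arc (φ.mapEdgeSet e), hpos.comp hφ, fun e => ?_,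
    fun e x hx w => hint _ x hx (φ w),
    fun e f hef => hdisj _ _ ((Hom.mapEdgeSet.injective φ hφ).ne hef)⟩
  obtain ⟨hc, hi, u', v', hs, h0, h1⟩ := hend (φ.mapEdgeSet e)
  refine ⟨hc, hi, ?_⟩
  obtain ⟨e, he⟩ := e
  induction e using Sym2.ind with
  | _ u v =>
    have huv : s(φ u, φ v) = s(u', v') := hs
    rcases Sym2.eq_iff.mp huv with ⟨rfl, rfl⟩ | ⟨rfl, rfl⟩
    · exact ⟨u, v, rfl, h0, h1⟩
    · exact ⟨v, u, Sym2.eq_swap, h0, h1⟩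

lemma parabola_segment_ne {a b c x : ℝ} (hab : a ≠ b) (hx : x ∈ Set.Ioo (0 : ℝ) 1) :
    (a, a ^ 2) + x • ((b, b ^ 2) - (a, a ^ 2)) ≠ (c, c ^ 2) := by
  intro h
  have h1 : a + x * (b - a) = c := congrArg Prod.fst h
  have h2 : a ^ 2 + x * (b ^ 2 - a ^ 2) = c ^ 2 := congrArg Prod.snd h
  have hba : b - a ≠ 0 := sub_ne_zero.mpr hab.symm
  have hx1 : 0 < 1 - x := sub_pos.mpr hx.2
  have hgap : 0 < x * (1 - x) * (b - a) ^ 2 := by have := hx.1; positivity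
  subst h1
  exact hgap.ne' (by linear_combination h2)

lemma isPlanar_of_edgeSet_subsingleton [Countable V] {G : SimpleGraph V}
    (hG : G.edgeSet.Subsingleton) : G.IsPlanar := by
  obtain ⟨k, hk⟩ := Countable.exists_injective_nat V
  have ht : Function.Injective fun v => (k v : ℝ) := Nat.cast_injective.comp hk
  set pos : V → ℝ × ℝ := fun v => ((k v : ℝ), (k v : ℝ) ^ 2)
  have hends : ∀ e : G.edgeSet, ∃ u v, (e : Sym2 V) = s(u, v) ∧ G.Adj u v := by
    rintro ⟨e, he⟩
    induction e using Sym2.ind with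
    | _ u v => exact ⟨u, v, rfl, he⟩
  choose u v huv hadj using hends
  refine ⟨pos, fun e x => pos (u e) + x • (pos (v e) - pos (u e)),
    fun a b hab => ht (congrArg Prod.fst hab), fun e => ⟨by fun_prop, ?_, u e, v e, huv e,
    by simp, by simp⟩, fun e x hx w => parabola_segment_ne (ht.ne (hadj e).ne) hx,
    fun e f hef => (hef (Subtype.ext (hG e.2 f.2))).elim⟩
  have hd : pos (v e) - pos (u e) ≠ 0 :=
    sub_ne_zero.mpr fun h => (hadj e).ne (ht (congrArg Prod.fst h)).symm
  exact fun x _ y _ hxy => smul_left_injective ℝ hd (add_left_cancel hxy)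

variable {G : SimpleGraph V} {H : SimpleGraph W}

lemma IsPlanar.sum (hG : G.IsPlanar) (hH : H.IsPlanar) : (G ⊕g H).IsPlanar := by
  obtain ⟨pos₁, arc₁, hpos₁, hend₁, hint₁, hdisj₁⟩ := hG
  obtain ⟨pos₂, arc₂, hpos₂, hend₂, hint₂, hdisj₂⟩ := hH
  -- the drawings are moved into the half-planes `x > 0` and `x < 0`
  set ψ : ℝ → ℝ × ℝ → ℝ × ℝ := fun s z => (s * Real.exp z.1, z.2)
  have hψ : ∀ s ≠ 0, Function.Injective (ψ s) := by
    intro s hs z z' h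
    simp only [ψ, Prod.mk.injEq, mul_right_inj' hs, Real.exp_eq_exp] at h
    exact Prod.ext h.1 h.2
  have hψc : ∀ s, Continuous (ψ s) := fun s => by fun_prop
  have hψne : ∀ z z', ψ 1 z ≠ ψ (-1) z' := by
    intro z z' h
    have := congrArg Prod.fst h
    simp only [ψ] at this
    linarith [Real.exp_pos z.1, Real.exp_pos z'.1]
  refine ⟨Sum.elim (ψ 1 ∘ pos₁) (ψ (-1) ∘ pos₂),
    fun e => Sum.elim (fun e₁ => ψ 1 ∘ arc₁ e₁) (fun e₂ => ψ (-1) ∘ arc₂ e₂) (edgeSetSumEquiv e),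
    ?_, ?_, ?_, ?_⟩
  · exact ((hψ 1 one_ne_zero).comp hpos₁).sumElim ((hψ (-1) (by norm_num)).comp hpos₂)
      fun a b => hψne _ _
  · intro e
    obtain ⟨e, rfl⟩ := edgeSetSumEquiv.symm.surjective e
    rcases e with e | e
    · obtain ⟨hc, hi, u, v, hs, h0, h1⟩ := hend₁ e
      simp only [Equiv.apply_symm_apply, Sum.elim_inl, Function.comp_apply]
      refine ⟨(hψc 1).comp_continuousOn hc, (hψ 1 one_ne_zero).comp_injOn hi, .inl u, .inl v,
        ?_, congrArg _ h0, congrArg _ h1⟩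
      rcases e with ⟨e, he⟩
      induction e using Sym2.ind
      exact congrArg (Sym2.map Sum.inl) hs
    · obtain ⟨hc, hi, u, v, hs, h0, h1⟩ := hend₂ e
      simp only [Equiv.apply_symm_apply, Sum.elim_inr, Function.comp_apply]
      refine ⟨(hψc (-1)).comp_continuousOn hc, (hψ (-1) (by norm_num)).comp_injOn hi,
        .inr u, .inr v, ?_, congrArg _ h0, congrArg _ h1⟩
      rcases e with ⟨e, he⟩
      induction e using Sym2.ind
      exact congrArg (Sym2.map Sum.inr) hs
  · intro e x hx w
    obtain ⟨e, rfl⟩ := edgeSetSumEquiv.symm.surjective e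
    rcases e with e | e <;> rcases w with w | w <;>
      simp only [Equiv.apply_symm_apply, Sum.elim_inl, Sum.elim_inr, Function.comp_apply]
    · exact (hψ 1 one_ne_zero).ne (hint₁ e x hx w)
    · exact hψne _ _
    · exact (hψne _ _).symm
    · exact (hψ (-1) (by norm_num)).ne (hint₂ e x hx w)
  · intro e f hef x hx y hy
    obtain ⟨e, rfl⟩ := edgeSetSumEquiv.symm.surjective e
    obtain ⟨f, rfl⟩ := edgeSetSumEquiv.symm.surjective f
    rcases e with e | e <;> rcases f with f | f <;>
      simp only [Equiv.apply_symm_apply, Sum.elim_inl, Sum.elim_inr, Function.comp_apply]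
    · exact (hψ 1 one_ne_zero).ne (hdisj₁ e f (fun h => hef (h ▸ rfl)) x hx y hy)
    · exact hψne _ _
    · exact (hψne _ _).symm
    · exact (hψ (-1) (by norm_num)).ne (hdisj₂ e f (fun h => hef (h ▸ rfl)) x hx y hy)

lemma HasPlanarDecomposition.mono [Countable V] {t t' : ℕ} (h : G.HasPlanarDecomposition t)
    (htt' : t ≤ t') : G.HasPlanarDecomposition t' := by
  obtain ⟨f, hle, hplanar, hsup⟩ := h
  refine ⟨fun i => if hi : (i : ℕ) < t then f ⟨i, hi⟩ else ⊥, fun i => ?_, fun i => ?_, ?_⟩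
  · dsimp only
    split_ifs
    exacts [hle _, bot_le]
  · dsimp only
    split_ifs
    exacts [hplanar _, isPlanar_of_edgeSet_subsingleton (by simp)]
  · subst hsup
    refine le_antisymm (iSup_le fun i => ?_) (iSup_le fun j => ?_)
    · dsimp only
      split_ifs
      exacts [le_iSup f _, bot_le]
    · exact le_iSup_of_le (Fin.castLE htt' j) (by simp)

lemma HasPlanarDecomposition.comap {F : SimpleGraph W} {t : ℕ} (φ : G ↪g F)
    (h : F.HasPlanarDecomposition t) : G.HasPlanarDecomposition t := by
  obtain ⟨f, hle, hplanar, hsup⟩ := h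
  refine ⟨fun i => (f i).comap φ, fun i a b hab => φ.map_adj_iff.mp (hle i hab),
    fun i => (hplanar i).of_hom (Hom.comap φ (f i)) φ.injective, ?_⟩
  subst hsup
  ext a b
  rw [iSup_adj, ← φ.map_adj_iff, iSup_adj]
  rfl

lemma Iso.hasPlanarDecomposition_iff (φ : G ≃g H) {t : ℕ} :
    G.HasPlanarDecomposition t ↔ H.HasPlanarDecomposition t :=
  ⟨.comap φ.symm.toEmbedding, .comap φ.toEmbedding⟩

lemma Iso.thickness_eq (φ : G ≃g H) : G.thickness = H.thickness := by
  simp only [thickness, φ.hasPlanarDecomposition_iff]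

lemma hasPlanarDecomposition_sum_iff {t : ℕ} :
    (G ⊕g H).HasPlanarDecomposition t ↔
      G.HasPlanarDecomposition t ∧ H.HasPlanarDecomposition t := by
  refine ⟨fun h => ⟨h.comap Embedding.sumInl, h.comap Embedding.sumInr⟩, ?_⟩
  rintro ⟨⟨f, hf, hfp, hfs⟩, ⟨g, hg, hgp, hgs⟩⟩
  refine ⟨fun i => f i ⊕g g i, fun i => ?_, fun i => (hfp i).sum (hgp i), ?_⟩
  · rintro (a | a) (b | b) hab
    exacts [hf i hab, by simp at hab, by simp at hab, hg i hab]
  · subst hfs hgs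
    ext (a | a) (b | b) <;> simp [iSup_adj]

lemma exists_hasPlanarDecomposition [Finite V] (G : SimpleGraph V) :
    ∃ t, G.HasPlanarDecomposition t := by
  obtain ⟨t, ⟨σ⟩⟩ := Finite.exists_equiv_fin G.edgeSet
  refine ⟨t, fun i => fromEdgeSet {(σ.symm i : Sym2 V)}, fun i => ?_,
    fun i => isPlanar_of_edgeSet_subsingleton ?_, ?_⟩
  · rw [fromEdgeSet_le]
    exact Set.sdiff_subset.trans (Set.singleton_subset_iff.mpr (σ.symm i).2)
  · rw [edgeSet_fromEdgeSet]
    exact Set.subsingleton_singleton.anti Set.sdiff_subset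
  · ext a b
    simp only [iSup_adj, fromEdgeSet_adj, Set.mem_singleton_iff]
    constructor
    · rintro ⟨i, he, -⟩
      exact (mem_edgeSet G).mp (he ▸ (σ.symm i).2)
    · intro hab
      exact ⟨σ ⟨s(a, b), hab⟩, by simp, hab.ne⟩

lemma thickness_le_iff [Finite V] {t : ℕ} : G.thickness ≤ t ↔ G.HasPlanarDecomposition t :=
  ⟨HasPlanarDecomposition.mono (Nat.sInf_mem (exists_hasPlanarDecomposition G)),
    fun h => Nat.sInf_le h⟩

lemma thickness_sum [Finite V] [Finite W] :
    (G ⊕g H).thickness = max G.thickness H.thickness :=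
  eq_of_forall_ge_iff fun t => by
    simp only [thickness_le_iff, hasPlanarDecomposition_sum_iff, max_le_iff]

def tensorProdCompleteBipartiteIso (α β γ δ : Type*) :
    (completeBipartiteGraph α β).tensorProd (completeBipartiteGraph γ δ) ≃g
      completeBipartiteGraph (α × γ) (β × δ) ⊕g completeBipartiteGraph (α × δ) (β × γ) where
  toFun
    | (.inl a, .inl c) => .inl (.inl (a, c))
    | (.inr b, .inr d) => .inl (.inr (b, d))
    | (.inl a, .inr d) => .inr (.inl (a, d))
    | (.inr b, .inl c) => .inr (.inr (b, c))
  invFun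
    | .inl (.inl (a, c)) => (.inl a, .inl c)
    | .inl (.inr (b, d)) => (.inr b, .inr d)
    | .inr (.inl (a, d)) => (.inl a, .inr d)
    | .inr (.inr (b, c)) => (.inr b, .inl c)
  left_inv := by rintro ⟨a | a, c | c⟩ <;> rfl
  right_inv := by rintro ((⟨a, c⟩ | ⟨b, d⟩) | (⟨a, d⟩ | ⟨b, c⟩)) <;> rfl
  map_rel_iff' := by
    rintro ⟨a | a, c | c⟩ ⟨b | b, d | d⟩ <;> simp [tensorProd]

end SimpleGraph

theorem thickness_tensorProd_completeBipartite_general (m n p q : ℕ) :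
    ((completeBipartiteGraph (Fin m) (Fin n)).tensorProd
        (completeBipartiteGraph (Fin p) (Fin q))).thickness =
      max (completeBipartiteGraph (Fin (m * p)) (Fin (n * q))).thickness
          (completeBipartiteGraph (Fin (m * q)) (Fin (n * p))).thickness := by
  rw [(tensorProdCompleteBipartiteIso _ _ _ _).thickness_eq, thickness_sum,
    (completeBipartiteGraphCongr finProdFinEquiv finProdFinEquiv).thickness_eq,
    (completeBipartiteGraphCongr finProdFinEquiv finProdFinEquiv).thickness_eq]

/-- `θ(K_{m,n} × K_{p,q}) = max{θ(K_{mp,nq}), θ(K_{mq,np})}` for all positive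
integers `m, n, p, q`. -/
theorem thickness_tensorProd_completeBipartite (m n p q : ℕ)
    (hm : 1 ≤ m) (hn : 1 ≤ n) (hp : 1 ≤ p) (hq : 1 ≤ q) :
    ((completeBipartiteGraph (Fin m) (Fin n)).tensorProd
        (completeBipartiteGraph (Fin p) (Fin q))).thickness =
      max (completeBipartiteGraph (Fin (m * p)) (Fin (n * q))).thickness
          (completeBipartiteGraph (Fin (m * q)) (Fin (n * p))).thickness :=
  thickness_tensorProd_completeBipartite_general m n p q
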